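/- For all j ∈ ℕ₀ and s₀ ∈ [0,T) it holds that ∫_{s₀}^T ((s₁−s₀)·ϱ(s₀,s₁))^{−1} ∫_{s₁}^T ((s₂−s₁)·ϱ(s₁,s₂))^{−1} ⋯ ∫_{s_j}^T ((s_{j+1}−s_j)·ϱ(s_j,s_{j+1}))^{−1} ds_{j+1} ⋯ ds₂ ds₁ = (T−s₀)^{j+1} · ∏_{i=0}^{j} ∫₀¹ (1−s)^{i}/(s·ρ(s)) ds ≥ (π(T−s₀))^{j+1} / Γ((j+3)/2)², where Γ denotes the Gamma function. -/

import Mathlib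

open MeasureTheory
open scoped ENNReal Real

/-- The iterated integral
`∫_{s₀}^T ((s₁−s₀)ϱ(s₀,s₁))⁻¹ ⋯ ∫_{s_{j−1}}^T ((s_j−s_{j−1})ϱ(s_{j−1},s_j))⁻¹ ds_j ⋯ ds₁`,
interpreted as an iterated lower Lebesgue integral with values in `[0,∞]`. -/
noncomputable def iterInt (T : ℝ) (ϱ : ℝ → ℝ → ℝ) : ℕ → ℝ → ℝ≥0∞
  | 0, _ => 1
  | j + 1, s₀ =>
      ∫⁻ s in Set.Ioo s₀ T,
        ENNReal.ofReal (((s - s₀) * ϱ s₀ s)⁻¹) * iterInt T ϱ j s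

/-!
The substitution `s = s₀ + (T - s₀) u` turns every layer of the iterated integral into
`(T - s₀) ∫₀¹ (1 - u)^i / (u ρ(u)) du`, the factor `(T - s)^i` produced by the inner layers
becoming `(T - s₀)^i (1 - u)^i`; induction on the depth gives the product formula. For the bound,
Cauchy–Schwarz against `∫₀¹ ρ = 1` gives
`∫₀¹ (1 - u)^i / (u ρ(u)) du ≥ B(1/2, i/2 + 1)² = π (Γ((i+2)/2) / Γ((i+3)/2))²`,
and the product of these lower bounds telescopes to `π^{j+1} / Γ((j+3)/2)²`.
-/

theorem ENNReal.sq_lintegral_rpow_half_mul_le {α : Type*} [MeasurableSpace α] {μ : Measure α}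
    {f g : α → ℝ≥0∞} (hf : AEMeasurable f μ) (hg : AEMeasurable g μ) :
    (∫⁻ a, (f a * g a) ^ (1 / 2 : ℝ) ∂μ) ^ 2 ≤ (∫⁻ a, f a ∂μ) * ∫⁻ a, g a ∂μ := by
  have hsq : ∀ x : ℝ≥0∞, (x ^ (1 / 2 : ℝ)) ^ (2 : ℝ) = x := fun x => by
    rw [← ENNReal.rpow_mul]; norm_num
  have hholder := ENNReal.lintegral_mul_le_Lp_mul_Lq μ Real.HolderConjugate.two_two
    (hf.pow_const (1 / 2 : ℝ)) (hg.pow_const (1 / 2 : ℝ))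
  simp only [Pi.mul_apply, hsq] at hholder
  calc (∫⁻ a, (f a * g a) ^ (1 / 2 : ℝ) ∂μ) ^ 2
      = (∫⁻ a, f a ^ (1 / 2 : ℝ) * g a ^ (1 / 2 : ℝ) ∂μ) ^ (2 : ℝ) := by
        simp only [ENNReal.mul_rpow_of_nonneg _ _ (by norm_num : (0 : ℝ) ≤ 1 / 2)]
        norm_cast
    _ ≤ ((∫⁻ a, f a ∂μ) ^ (1 / 2 : ℝ) * (∫⁻ a, g a ∂μ) ^ (1 / 2 : ℝ)) ^ (2 : ℝ) :=
        ENNReal.rpow_le_rpow hholder (by norm_num)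
    _ = (∫⁻ a, f a ∂μ) * ∫⁻ a, g a ∂μ := by
        rw [ENNReal.mul_rpow_of_nonneg _ _ (by norm_num), hsq, hsq]

theorem lintegral_Ioo_rpow_mul_one_sub_rpow {a b : ℝ} (ha : 0 < a) (hb : 0 < b) :
    ∫⁻ x in Set.Ioo (0 : ℝ) 1, ENNReal.ofReal (x ^ (a - 1) * (1 - x) ^ (b - 1))
      = ENNReal.ofReal (ProbabilityTheory.beta a b) := by
  have hB := ProbabilityTheory.beta_pos ha hb
  have h := ProbabilityTheory.lintegral_betaPDF_eq_one ha hb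
  rw [ProbabilityTheory.lintegral_betaPDF] at h
  simp_rw [mul_assoc, ENNReal.ofReal_mul (one_div_pos.2 hB).le] at h
  rw [lintegral_const_mul' _ _ ENNReal.ofReal_ne_top] at h
  calc _ = ENNReal.ofReal (ProbabilityTheory.beta a b * (1 / ProbabilityTheory.beta a b))
        * ∫⁻ x in Set.Ioo (0 : ℝ) 1, ENNReal.ofReal (x ^ (a - 1) * (1 - x) ^ (b - 1)) := by
        rw [mul_one_div_cancel hB.ne', ENNReal.ofReal_one, one_mul]
    _ = _ := by rw [ENNReal.ofReal_mul hB.le, mul_assoc, h, mul_one]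

theorem setLIntegral_Ioo_eq_mul_setLIntegral_Ioo_zero_one {a b : ℝ} (hab : a < b)
    (g : ℝ → ℝ≥0∞) :
    ∫⁻ s in Set.Ioo a b, g s
      = ENNReal.ofReal (b - a) * ∫⁻ u in Set.Ioo (0 : ℝ) 1, g ((b - a) * u + a) := by
  have hba : 0 < b - a := sub_pos.2 hab
  have h := lintegral_image_eq_lintegral_abs_deriv_mul (measurableSet_Ioo (a := 0) (b := 1))
    (f := fun u => (b - a) * u + a) (f' := fun _ => b - a)
    (fun u _ => (((hasDerivAt_id' u).const_mul (b - a)).add_const a).hasDerivWithinAt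
      |>.congr_deriv (mul_one _))
    (fun x _ y _ hxy => by simpa [hba.ne'] using hxy) g
  rw [Set.image_affine_Ioo hba, mul_zero, zero_add, mul_one, sub_add_cancel,
    abs_of_pos hba, lintegral_const_mul' _ _ ENNReal.ofReal_ne_top] at h
  exact h

theorem Real.one_sub_pow_div_rpow_half {x : ℝ} (hx : 0 < x) (hx1 : x ≤ 1) (i : ℕ) :
    ((1 - x) ^ i / x) ^ (1 / 2 : ℝ)
      = x ^ ((1 / 2 : ℝ) - 1) * (1 - x) ^ (((i : ℝ) + 2) / 2 - 1) := by
  have h1x : 0 ≤ 1 - x := by linarith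
  rw [Real.div_rpow (pow_nonneg h1x i) hx.le, ← Real.rpow_natCast, ← Real.rpow_mul h1x,
    show (1 / 2 : ℝ) - 1 = -(1 / 2) by norm_num, Real.rpow_neg hx.le,
    show ((i : ℝ) + 2) / 2 - 1 = i * (1 / 2) by ring, div_eq_mul_inv, mul_comm]

theorem Real.prod_range_Gamma_div_Gamma (n : ℕ) :
    ∏ i ∈ Finset.range n, Real.Gamma (((i : ℝ) + 2) / 2) / Real.Gamma (((i : ℝ) + 3) / 2)
      = (Real.Gamma (((n : ℝ) + 2) / 2))⁻¹ := by
  induction n with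
  | zero => norm_num
  | succ n ih =>
    have hΓ : Real.Gamma (((n : ℝ) + 2) / 2) ≠ 0 := (Real.Gamma_pos_of_pos (by positivity)).ne'
    rw [Finset.prod_range_succ, ih, inv_mul_eq_div, div_div_cancel_left' hΓ]
    push_cast
    ring_nf

section

variable {ρ : ℝ → ℝ}

theorem pi_mul_sq_Gamma_div_le_lintegral (hρmeas : Measurable ρ)
    (hρpos : ∀ r ∈ Set.Ioo (0 : ℝ) 1, 0 < ρ r)
    (hρint : ∫⁻ s in Set.Ioo (0 : ℝ) 1, ENNReal.ofReal (ρ s) = 1) (i : ℕ) :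
    ENNReal.ofReal (π * (Real.Gamma (((i : ℝ) + 2) / 2) / Real.Gamma (((i : ℝ) + 3) / 2)) ^ 2)
      ≤ ∫⁻ s in Set.Ioo (0 : ℝ) 1, ENNReal.ofReal ((1 - s) ^ i / (s * ρ s)) := by
  have hcs := ENNReal.sq_lintegral_rpow_half_mul_le (μ := volume.restrict (Set.Ioo (0 : ℝ) 1))
    (f := fun s => ENNReal.ofReal ((1 - s) ^ i / (s * ρ s))) (g := fun s => ENNReal.ofReal (ρ s))
    (by fun_prop) (by fun_prop)
  have hsqrt : ∫⁻ s in Set.Ioo (0 : ℝ) 1,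
      (ENNReal.ofReal ((1 - s) ^ i / (s * ρ s)) * ENNReal.ofReal (ρ s)) ^ (1 / 2 : ℝ)
      = ∫⁻ s in Set.Ioo (0 : ℝ) 1,
          ENNReal.ofReal (s ^ ((1 / 2 : ℝ) - 1) * (1 - s) ^ (((i : ℝ) + 2) / 2 - 1)) := by
    refine setLIntegral_congr_fun measurableSet_Ioo fun s hs => ?_
    have hρs := hρpos s hs
    have h1s : 0 ≤ (1 - s) ^ i := pow_nonneg (sub_nonneg.2 hs.2.le) i
    rw [← ENNReal.ofReal_mul (div_nonneg h1s (mul_pos hs.1 hρs).le), div_mul_eq_div_div,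
      div_mul_cancel₀ _ hρs.ne',
      ENNReal.ofReal_rpow_of_nonneg (div_nonneg h1s hs.1.le) (by norm_num),
      Real.one_sub_pow_div_rpow_half hs.1 hs.2.le]
  rw [hsqrt, hρint, mul_one, lintegral_Ioo_rpow_mul_one_sub_rpow (by norm_num) (by positivity),
    ProbabilityTheory.beta, ← ENNReal.ofReal_pow (by positivity)] at hcs
  convert hcs using 2
  rw [show (1 / 2 : ℝ) + ((i : ℝ) + 2) / 2 = ((i : ℝ) + 3) / 2 by ring,
    Real.Gamma_one_half_eq, mul_div_assoc, mul_pow, Real.sq_sqrt Real.pi_pos.le]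

theorem ofReal_pi_pow_div_Gamma_sq_le_prod (hρmeas : Measurable ρ)
    (hρpos : ∀ r ∈ Set.Ioo (0 : ℝ) 1, 0 < ρ r)
    (hρint : ∫⁻ s in Set.Ioo (0 : ℝ) 1, ENNReal.ofReal (ρ s) = 1) (n : ℕ) :
    ENNReal.ofReal (π ^ n / Real.Gamma (((n : ℝ) + 2) / 2) ^ 2)
      ≤ ∏ i ∈ Finset.range n, ∫⁻ s in Set.Ioo (0 : ℝ) 1, ENNReal.ofReal ((1 - s) ^ i / (s * ρ s)) :=
  calc ENNReal.ofReal (π ^ n / Real.Gamma (((n : ℝ) + 2) / 2) ^ 2)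
      = ∏ i ∈ Finset.range n, ENNReal.ofReal
          (π * (Real.Gamma (((i : ℝ) + 2) / 2) / Real.Gamma (((i : ℝ) + 3) / 2)) ^ 2) := by
        rw [← ENNReal.ofReal_prod_of_nonneg fun i _ => by positivity, Finset.prod_mul_distrib,
          Finset.prod_pow, Real.prod_range_Gamma_div_Gamma, Finset.prod_const, Finset.card_range,
          inv_pow, div_eq_mul_inv]
    _ ≤ _ := Finset.prod_le_prod' fun i _ => pi_mul_sq_Gamma_div_le_lintegral hρmeas hρpos hρint i

theorem lintegral_Ioo_kernel_mul_pow {s₀ T : ℝ} (hs₀ : s₀ < T) (j : ℕ) :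
    ∫⁻ s in Set.Ioo s₀ T, ENNReal.ofReal (((s - s₀) * ((T - s₀)⁻¹ * ρ ((s - s₀) / (T - s₀))))⁻¹)
        * ENNReal.ofReal ((T - s) ^ j)
      = ENNReal.ofReal ((T - s₀) ^ (j + 1))
          * ∫⁻ u in Set.Ioo (0 : ℝ) 1, ENNReal.ofReal ((1 - u) ^ j / (u * ρ u)) := by
  have hc : 0 < T - s₀ := sub_pos.2 hs₀
  have hintegrand : Set.EqOn
      (fun u => ENNReal.ofReal ((((T - s₀) * u + s₀ - s₀)
          * ((T - s₀)⁻¹ * ρ (((T - s₀) * u + s₀ - s₀) / (T - s₀))))⁻¹)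
        * ENNReal.ofReal ((T - ((T - s₀) * u + s₀)) ^ j))
      (fun u => ENNReal.ofReal ((T - s₀) ^ j) * ENNReal.ofReal ((1 - u) ^ j / (u * ρ u)))
      (Set.Ioo 0 1) := fun u hu => by
    have hT : T - ((T - s₀) * u + s₀) = (T - s₀) * (1 - u) := by ring
    have hρu : (T - s₀) * u * ((T - s₀)⁻¹ * ρ u) = u * ρ u := by field_simp
    simp only [add_sub_cancel_right, mul_div_cancel_left₀ u hc.ne', hρu, hT]
    rw [← ENNReal.ofReal_mul' (pow_nonneg (mul_nonneg hc.le (sub_nonneg.2 hu.2.le)) j),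
      ← ENNReal.ofReal_mul (pow_nonneg hc.le j), mul_pow, div_eq_mul_inv]
    ring_nf
  rw [setLIntegral_Ioo_eq_mul_setLIntegral_Ioo_zero_one hs₀,
    setLIntegral_congr_fun measurableSet_Ioo hintegrand,
    lintegral_const_mul' _ _ ENNReal.ofReal_ne_top, ← mul_assoc,
    ← ENNReal.ofReal_mul hc.le, pow_succ']

end

theorem iterInt_eq_ofReal_pow_mul_prod {T : ℝ} {ρ : ℝ → ℝ} (hρmeas : Measurable ρ)
    {ϱ : ℝ → ℝ → ℝ} (hϱ : ∀ t ∈ Set.Ico (0 : ℝ) T, ∀ s ∈ Set.Ioc t T,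
      ϱ t s = (T - t)⁻¹ * ρ ((s - t) / (T - t)))
    (j : ℕ) {s₀ : ℝ} (hs₀ : s₀ ∈ Set.Ico (0 : ℝ) T) :
    iterInt T ϱ j s₀ = ENNReal.ofReal ((T - s₀) ^ j)
      * ∏ i ∈ Finset.range j,
          ∫⁻ s in Set.Ioo (0 : ℝ) 1, ENNReal.ofReal ((1 - s) ^ i / (s * ρ s)) := by
  induction j generalizing s₀ with
  | zero => simp [iterInt]
  | succ j ih =>
    have hintegrand : Set.EqOn
        (fun s => ENNReal.ofReal (((s - s₀) * ϱ s₀ s)⁻¹) * iterInt T ϱ j s)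
        (fun s => ENNReal.ofReal (((s - s₀) * ((T - s₀)⁻¹ * ρ ((s - s₀) / (T - s₀))))⁻¹)
          * ENNReal.ofReal ((T - s) ^ j)
          * ∏ i ∈ Finset.range j,
              ∫⁻ s in Set.Ioo (0 : ℝ) 1, ENNReal.ofReal ((1 - s) ^ i / (s * ρ s)))
        (Set.Ioo s₀ T) := fun s hs => by
      dsimp only
      rw [ih ⟨hs₀.1.trans hs.1.le, hs.2⟩, hϱ s₀ hs₀ s ⟨hs.1, hs.2.le⟩, mul_assoc]
    rw [iterInt, setLIntegral_congr_fun measurableSet_Ioo hintegrand,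
      lintegral_mul_const _ (by fun_prop), lintegral_Ioo_kernel_mul_pow hs₀.2,
      Finset.prod_range_succ]
    ring

theorem stmt11_general (T : ℝ)
    (ρ : ℝ → ℝ) (hρmeas : Measurable ρ) (hρpos : ∀ r ∈ Set.Ioo (0 : ℝ) 1, 0 < ρ r)
    (hρint : ∫⁻ s in Set.Ioo (0 : ℝ) 1, ENNReal.ofReal (ρ s) = 1)
    (ϱ : ℝ → ℝ → ℝ)
    (hϱ : ∀ t ∈ Set.Ico (0 : ℝ) T, ∀ s ∈ Set.Ioc t T,
      ϱ t s = (T - t)⁻¹ * ρ ((s - t) / (T - t)))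
    (j : ℕ) (s₀ : ℝ) (hs₀ : s₀ ∈ Set.Ico (0 : ℝ) T) :
    iterInt T ϱ (j + 1) s₀
        = ENNReal.ofReal ((T - s₀) ^ (j + 1))
          * ∏ i ∈ Finset.range (j + 1),
              ∫⁻ s in Set.Ioo (0 : ℝ) 1, ENNReal.ofReal ((1 - s) ^ i / (s * ρ s))
      ∧ ENNReal.ofReal ((π * (T - s₀)) ^ (j + 1) / Real.Gamma (((j : ℝ) + 3) / 2) ^ 2)
          ≤ iterInt T ϱ (j + 1) s₀ := by
  have hformula := iterInt_eq_ofReal_pow_mul_prod hρmeas hϱ (j + 1) hs₀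
  refine ⟨hformula, ?_⟩
  have hprod := ofReal_pi_pow_div_Gamma_sq_le_prod hρmeas hρpos hρint (j + 1)
  rw [show (((j + 1 : ℕ) : ℝ) + 2) / 2 = ((j : ℝ) + 3) / 2 by push_cast; ring] at hprod
  rw [hformula, mul_pow, mul_comm (π ^ _), mul_div_assoc,
    ENNReal.ofReal_mul (pow_nonneg (sub_nonneg.2 hs₀.2.le) _)]
  gcongr

/-- Remark 2.6: let `T ∈ (0,∞)`, let `ρ : (0,1) → (0,∞)` be measurable with `∫₀¹ ρ(s) ds = 1`,
and let `ϱ(t,s) = (T−t)⁻¹ ρ((s−t)/(T−t))`.  Then for all `j ∈ ℕ₀` and `s₀ ∈ [0,T)` the iterated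
integral (with `j+1` integrations) equals
`(T−s₀)^{j+1} ∏_{i=0}^{j} ∫₀¹ (1−s)^i/(s ρ(s)) ds` and is at least
`(π(T−s₀))^{j+1}/Γ((j+3)/2)²`. -/
theorem stmt11 (T : ℝ) (hT : 0 < T)
    (ρ : ℝ → ℝ) (hρmeas : Measurable ρ) (hρpos : ∀ r ∈ Set.Ioo (0 : ℝ) 1, 0 < ρ r)
    (hρint : ∫⁻ s in Set.Ioo (0 : ℝ) 1, ENNReal.ofReal (ρ s) = 1)
    (ϱ : ℝ → ℝ → ℝ)
    (hϱpos : ∀ t ∈ Set.Icc (0 : ℝ) T, ∀ s ∈ Set.Icc (0 : ℝ) T, 0 < ϱ t s)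
    (hϱ : ∀ t ∈ Set.Ico (0 : ℝ) T, ∀ s ∈ Set.Ioc t T,
      ϱ t s = (T - t)⁻¹ * ρ ((s - t) / (T - t)))
    (j : ℕ) (s₀ : ℝ) (hs₀ : s₀ ∈ Set.Ico (0 : ℝ) T) :
    iterInt T ϱ (j + 1) s₀
        = ENNReal.ofReal ((T - s₀) ^ (j + 1))
          * ∏ i ∈ Finset.range (j + 1),
              ∫⁻ s in Set.Ioo (0 : ℝ) 1, ENNReal.ofReal ((1 - s) ^ i / (s * ρ s))
      ∧ ENNReal.ofReal ((π * (T - s₀)) ^ (j + 1) / Real.Gamma (((j : ℝ) + 3) / 2) ^ 2)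
          ≤ iterInt T ϱ (j + 1) s₀ :=
  stmt11_general T ρ hρmeas hρpos hρint ϱ hϱ j s₀ hs₀
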